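/- Let R be a commutative ring and S a multiplicative subset. The following are equivalent: (1) every free R-module is u-S-semisimple; (2) every R-module is u-S-semisimple; (3) every short exact sequence of R-modules is u-S-split; (4) Ext¹_R(M, N) is u-S-torsion for all R-modules M, N; (5) every R-module is u-S-projective; (6) every R-module is u-S-injective. -/

import Mathlib

open CategoryTheory

universe u

def IsUSTorsionMod {R : Type u} [CommRing R] (S : Submonoid R) (X : ModuleCat.{u} R) : Prop :=
  ∃ s ∈ S, ∀ x : X, s • x = 0

def IsUSTorsion {R : Type u} [CommRing R] (S : Submonoid R) (T : Type u)
    [AddCommGroup T] [Module R T] : Prop :=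
  ∃ s ∈ S, ∀ x : T, s • x = 0

noncomputable def ext (R : Type u) [CommRing R] (n : ℕ) (P M : ModuleCat.{u} R) :
    ModuleCat.{u} R :=
  ((Ext R (ModuleCat.{u} R) n).obj (Opposite.op P)).obj M

def IsUSProjective {R : Type u} [CommRing R] (S : Submonoid R) (P : Type u)
    [AddCommGroup P] [Module R P] : Prop :=
  ∀ M : ModuleCat.{u} R, IsUSTorsionMod S (ext R 1 (ModuleCat.of R P) M)

def IsUSInjective {R : Type u} [CommRing R] (S : Submonoid R) (E : Type u)
    [AddCommGroup E] [Module R E] : Prop :=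
  ∀ M : ModuleCat.{u} R, IsUSTorsionMod S (ext R 1 M (ModuleCat.of R E))


/-- `M` is `u`-`S`-semisimple: every short exact sequence with middle term `M` is
`u`-`S`-split. -/
def IsUSSemisimple {R : Type u} [CommRing R] (S : Submonoid R)
    (M : Type u) [AddCommGroup M] [Module R M] : Prop :=
  ∀ (L N : Type u) [AddCommGroup L] [Module R L] [AddCommGroup N] [Module R N]
    (f : L →ₗ[R] M) (g : M →ₗ[R] N),
    Function.Injective f → Function.Surjective g →
    LinearMap.range f = LinearMap.ker g →
    ∃ s ∈ S, ∃ f' : M →ₗ[R] L, ∀ a : L, f' (f a) = s • a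
/-!
For a projective resolution `P` of `M`, `Ext¹(M, N)` is the module of cocycles `P₁ → N` modulo
the coboundaries `ψ ∘ d`, and every cocycle factors through `P₁ ↠ K := ker (P₀ → M)`. If
`K ↪ P₀` has a retraction up to `s`, then `s` times every cocycle is a coboundary. Conversely,
for `0 → A → B → C → 0`, a lift `ρ : P₀ → B` of `P₀ → C` turns the extension into a cocycle
`τ : P₁ → A`; if `s • τ = ψ ∘ d`, then `(a, p) ↦ s • a + ψ p` descends along
`(f, ρ) : A × P₀ ↠ B` to a retraction of `f` up to `s`. The same descent applies to
`B →₀ R ↠ B` once the free module `B →₀ R` splits `ker (B →₀ R ↠ C)` up to `s`.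
-/

namespace LinearMap

variable {R M N Q : Type*}

theorem exists_comp_eq_of_ker_le [Ring R] [AddCommGroup M] [Module R M] [AddCommGroup N]
    [Module R N] [AddCommGroup Q] [Module R Q] {p : M →ₗ[R] N} (hp : Function.Surjective p)
    {g : M →ₗ[R] Q} (h : ker p ≤ ker g) : ∃ g' : N →ₗ[R] Q, g' ∘ₗ p = g := by
  refine ⟨(ker p).liftQ g h ∘ₗ (p.quotKerEquivOfSurjective hp).symm.toLinearMap, ?_⟩
  ext m
  have : (p.quotKerEquivOfSurjective hp).symm (p m) = (ker p).mkQ m :=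
    (p.quotKerEquivOfSurjective hp).symm_apply_eq.2 rfl
  simp [this]

theorem exists_comp_eq_of_range_le [Semiring R] [AddCommMonoid M] [Module R M]
    [AddCommMonoid N] [Module R N] [AddCommMonoid Q] [Module R Q] {f : N →ₗ[R] Q}
    (hf : Function.Injective f) {φ : M →ₗ[R] Q} (h : range φ ≤ range f) :
    ∃ τ : M →ₗ[R] N, f ∘ₗ τ = φ := by
  let φ' : M →ₗ[R] range f := φ.codRestrict _ fun m => h ⟨m, rfl⟩
  refine ⟨(LinearEquiv.ofInjective f hf).symm.toLinearMap ∘ₗ φ', ?_⟩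
  ext m
  exact congrArg Subtype.val ((LinearEquiv.ofInjective f hf).apply_symm_apply (φ' m))

end LinearMap

theorem exists_retraction_smul_of_lift {R A B C P : Type*} [CommRing R] [AddCommGroup A]
    [Module R A] [AddCommGroup B] [Module R B] [AddCommGroup C] [Module R C] [AddCommGroup P]
    [Module R P] {f : A →ₗ[R] B} {g : B →ₗ[R] C} (hf : Function.Injective f)
    (hfg : LinearMap.range f = LinearMap.ker g) {ρ : P →ₗ[R] B}
    (hρ : Function.Surjective (g ∘ₗ ρ)) (s : R) {ψ : P →ₗ[R] A}
    (hψ : ∀ p, g (ρ p) = 0 → f (ψ p) = s • ρ p) :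
    ∃ f' : B →ₗ[R] A, ∀ a, f' (f a) = s • a := by
  have hgf : ∀ a, g (f a) = 0 := fun a => by
    rw [← LinearMap.mem_ker, ← hfg]
    exact LinearMap.mem_range_self f a
  have hsurj : Function.Surjective (f.coprod ρ) := by
    intro b
    obtain ⟨p, hp⟩ := hρ (g b)
    obtain ⟨a, ha⟩ : b - ρ p ∈ LinearMap.range f := by
      rw [hfg, LinearMap.mem_ker, map_sub, ← LinearMap.comp_apply, hp, sub_self]
    exact ⟨(a, p), by simp [ha]⟩
  have hker : LinearMap.ker (f.coprod ρ) ≤ LinearMap.ker ((s • LinearMap.id).coprod ψ) := by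
    rintro ⟨a, p⟩ (hap : f a + ρ p = 0)
    have hρp : ρ p = -f a := eq_neg_of_add_eq_zero_right hap
    have hψp : ψ p = -(s • a) := hf <| by
      rw [hψ p (by rw [hρp, map_neg, hgf, neg_zero]), hρp, map_neg, map_smul, smul_neg]
    simp [hψp]
  obtain ⟨f', hf'⟩ := LinearMap.exists_comp_eq_of_ker_le hsurj hker
  exact ⟨f', fun a => by simpa using LinearMap.congr_fun hf' (a, 0)⟩

namespace CategoryTheory

theorem ShortComplex.moduleCat_smul_homology_eq_zero_iff {R : Type*} [CommRing R]
    (T : ShortComplex (ModuleCat R)) (s : R) :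
    (∀ x : T.homology, s • x = 0) ↔ ∀ z : T.X₂, T.g z = 0 → ∃ y, T.f y = s • z := by
  simp_rw [← Module.mem_annihilator, T.moduleCatHomologyIso.toLinearEquiv.annihilator_eq,
    Module.mem_annihilator]
  refine (Submodule.Quotient.mk_surjective _).forall.trans (Subtype.forall.trans ?_)
  refine forall₂_congr fun z hz => ?_
  change (s • Submodule.Quotient.mk ⟨z, hz⟩ : _ ⧸ LinearMap.range T.moduleCatToCycles) = 0 ↔ _
  rw [← Submodule.Quotient.mk_smul, Submodule.Quotient.mk_eq_zero]
  simp only [LinearMap.mem_range, Subtype.ext_iff, SetLike.val_smul]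
  rfl

namespace ProjectiveResolution

theorem range_d_one_zero_eq_ker {R : Type*} [Ring R] {M : ModuleCat R}
    (P : ProjectiveResolution M) :
    LinearMap.range (P.complex.d 1 0).hom = LinearMap.ker (P.π.f 0).hom :=
  P.exact₀.moduleCat_range_eq_ker

variable {R : Type u} [CommRing R] {M : ModuleCat.{u} R} (P : ProjectiveResolution M)

theorem smul_ext_one_eq_zero_iff (N : ModuleCat.{u} R) (s : R) :
    (∀ x : ext R 1 M N, s • x = 0) ↔ ∀ φ : P.complex.X 1 ⟶ N, P.complex.d 2 1 ≫ φ = 0 →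
      ∃ ψ : P.complex.X 0 ⟶ N, P.complex.d 1 0 ≫ ψ = s • φ := by
  let e : ext R 1 M N ≅ ((P.complex.linearYonedaObj R N).sc' 0 1 2).homology :=
    P.isoExt 1 N ≪≫ ShortComplex.homologyMapIso ((P.complex.linearYonedaObj R N).isoSc' 0 1 2
      (by simp) (by simp))
  simp_rw [← Module.mem_annihilator, e.toLinearEquiv.annihilator_eq, Module.mem_annihilator,
    ShortComplex.moduleCat_smul_homology_eq_zero_iff]
  rfl

theorem smul_ext_one_eq_zero_of_retraction (N : ModuleCat.{u} R) (s : R)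
    (r : P.complex.X 0 →ₗ[R] LinearMap.ker (P.π.f 0).hom)
    (hr : ∀ k : LinearMap.ker (P.π.f 0).hom, r k = s • k) :
    ∀ x : ext R 1 M N, s • x = 0 := by
  rw [P.smul_ext_one_eq_zero_iff]
  intro φ hφ
  let p : P.complex.X 1 →ₗ[R] LinearMap.ker (P.π.f 0).hom :=
    (P.complex.d 1 0).hom.codRestrict _ fun x => P.range_d_one_zero_eq_ker ▸ ⟨x, rfl⟩
  have hp : Function.Surjective p := by
    rintro ⟨y, hy⟩
    obtain ⟨x, rfl⟩ := P.range_d_one_zero_eq_ker ▸ hy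
    exact ⟨x, rfl⟩
  have hker : LinearMap.ker p ≤ LinearMap.ker φ.hom := by
    rw [LinearMap.ker_codRestrict, ← (P.exact_succ 0).moduleCat_range_eq_ker]
    rintro _ ⟨x, rfl⟩
    exact congr($hφ x)
  obtain ⟨φ', hφ'⟩ := LinearMap.exists_comp_eq_of_ker_le hp hker
  refine ⟨ModuleCat.ofHom (φ' ∘ₗ r), ModuleCat.hom_ext (LinearMap.ext fun x => ?_)⟩
  change φ' (r (P.complex.d 1 0 x)) = s • φ x
  rw [show r (P.complex.d 1 0 x) = s • p x from hr (p x), map_smul]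
  exact congr(s • $hφ' x)

end ProjectiveResolution

end CategoryTheory

section Retraction

variable {R : Type u} [CommRing R] {A B C : Type u} [AddCommGroup A] [Module R A]
  [AddCommGroup B] [Module R B] [AddCommGroup C] [Module R C] {f : A →ₗ[R] B} {g : B →ₗ[R] C}

theorem exists_retraction_smul_of_smul_ext_one_eq_zero (hf : Function.Injective f)
    (hg : Function.Surjective g) (hfg : LinearMap.range f = LinearMap.ker g) (s : R)
    (hs : ∀ x : ext R 1 (ModuleCat.of R C) (ModuleCat.of R A), s • x = 0) :
    ∃ f' : B →ₗ[R] A, ∀ a, f' (f a) = s • a := by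
  obtain ⟨P⟩ : Nonempty (ProjectiveResolution (ModuleCat.of R C)) := HasProjectiveResolution.out
  let π₀ : P.complex.X 0 ⟶ ModuleCat.of R C := P.π.f 0
  have : Epi (ModuleCat.ofHom g) := (ModuleCat.epi_iff_surjective _).2 hg
  let ρ := Projective.factorThru π₀ (ModuleCat.ofHom g)
  have hρ : ∀ p, g (ρ p) = π₀ p := fun p => congr($(Projective.factorThru_comp π₀ _) p)
  obtain ⟨τ, hτ⟩ : ∃ τ : P.complex.X 1 →ₗ[R] A, f ∘ₗ τ = ρ.hom ∘ₗ (P.complex.d 1 0).hom := by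
    refine LinearMap.exists_comp_eq_of_range_le hf ?_
    rintro _ ⟨x, rfl⟩
    rw [hfg, LinearMap.mem_ker]
    exact (hρ _).trans congr($(P.complex_d_comp_π_f_zero) x)
  have hτ_cocycle : P.complex.d 2 1 ≫ ModuleCat.ofHom τ = 0 := by
    ext x
    refine hf ?_
    calc f (τ (P.complex.d 2 1 x)) = ρ (P.complex.d 1 0 (P.complex.d 2 1 x)) := congr($hτ _)
      _ = f 0 := by
        rw [← ConcreteCategory.comp_apply (P.complex.d 2 1), P.complex.d_comp_d]
        simp
  obtain ⟨ψ, hψ⟩ := (P.smul_ext_one_eq_zero_iff _ s).1 hs _ hτ_cocycle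
  refine exists_retraction_smul_of_lift hf hfg (ρ := ρ.hom) (fun c => ?_) s (ψ := ψ.hom) ?_
  · obtain ⟨p, hp⟩ := (ModuleCat.epi_iff_surjective (P.π.f 0)).1 inferInstance c
    exact ⟨p, (hρ p).trans hp⟩
  · intro p hp
    rw [hρ, ← LinearMap.mem_ker] at hp
    obtain ⟨x, rfl⟩ := P.range_d_one_zero_eq_ker ▸ hp
    calc f (ψ (P.complex.d 1 0 x)) = f (s • τ x) := congr(f ($hψ x))
      _ = s • ρ (P.complex.d 1 0 x) := by rw [map_smul]; exact congr(s • $hτ x)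

theorem exists_retraction_smul_of_isUSSemisimple_finsupp (S : Submonoid R)
    (hS : IsUSSemisimple S (B →₀ R)) (hf : Function.Injective f) (hg : Function.Surjective g)
    (hfg : LinearMap.range f = LinearMap.ker g) :
    ∃ s ∈ S, ∃ f' : B →ₗ[R] A, ∀ a, f' (f a) = s • a := by
  let ρ : (B →₀ R) →ₗ[R] B := Finsupp.linearCombination R id
  have hρ : Function.Surjective (g ∘ₗ ρ) := hg.comp (Finsupp.linearCombination_id_surjective R B)
  let K := LinearMap.ker (g ∘ₗ ρ)
  obtain ⟨s, hs, r, hr⟩ := hS K C K.subtype (g ∘ₗ ρ) K.injective_subtype hρ K.range_subtype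
  obtain ⟨τ, hτ⟩ : ∃ τ : K →ₗ[R] A, f ∘ₗ τ = ρ ∘ₗ K.subtype := by
    refine LinearMap.exists_comp_eq_of_range_le hf ?_
    rintro _ ⟨k, rfl⟩
    exact hfg ▸ k.2
  refine ⟨s, hs, exists_retraction_smul_of_lift hf hfg hρ s (ψ := τ ∘ₗ r) fun p hp => ?_⟩
  calc f (τ (r p)) = ρ (r p) := congr($hτ (r p))
    _ = s • ρ p := by rw [show r p = s • ⟨p, hp⟩ from hr ⟨p, hp⟩, Submodule.coe_smul, map_smul]

end Retraction

/-- characterizations of `u`-`S`-semisimple rings. -/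
theorem uS_semisimple_ring_tfae
    {R : Type u} [CommRing R] (S : Submonoid R) :
    List.TFAE
      [ -- (1) every free R-module is u-S-semisimple
        ∀ (M : Type u) [AddCommGroup M] [Module R M],
          Module.Free R M → IsUSSemisimple S M,
        -- (2) every R-module is u-S-semisimple
        ∀ (M : Type u) [AddCommGroup M] [Module R M], IsUSSemisimple S M,
        -- (3) every short exact sequence is u-S-split
        ∀ (A B C : Type u) [AddCommGroup A] [Module R A] [AddCommGroup B] [Module R B]
          [AddCommGroup C] [Module R C] (f : A →ₗ[R] B) (g : B →ₗ[R] C),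
          Function.Injective f → Function.Surjective g →
          LinearMap.range f = LinearMap.ker g →
          ∃ s ∈ S, ∃ f' : B →ₗ[R] A, ∀ a : A, f' (f a) = s • a,
        -- (4) Ext¹(M, N) is u-S-torsion for all M, N
        ∀ M N : ModuleCat.{u} R, IsUSTorsionMod S (ext R 1 M N),
        -- (5) every R-module is u-S-projective
        ∀ (M : Type u) [AddCommGroup M] [Module R M], IsUSProjective S M,
        -- (6) every R-module is u-S-injective
        ∀ (M : Type u) [AddCommGroup M] [Module R M], IsUSInjective S M ] := by
  tfae_have 1 → 3 := fun h1 A B C _ _ _ _ _ _ f g hf hg hfg =>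
    exists_retraction_smul_of_isUSSemisimple_finsupp S (h1 _ inferInstance) hf hg hfg
  tfae_have 3 → 2 := fun h3 M _ _ L N _ _ _ _ f g => h3 L M N f g
  tfae_have 2 → 1 := fun h2 M _ _ _ => h2 M
  tfae_have 3 → 4 := by
    intro h3 M N
    obtain ⟨P⟩ : Nonempty (ProjectiveResolution M) := HasProjectiveResolution.out
    obtain ⟨s, hs, r, hr⟩ := h3 _ _ M (LinearMap.ker (P.π.f 0).hom).subtype (P.π.f 0).hom
      (Submodule.injective_subtype _) ((ModuleCat.epi_iff_surjective _).1 inferInstance)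
      (Submodule.range_subtype _)
    exact ⟨s, hs, P.smul_ext_one_eq_zero_of_retraction N s r hr⟩
  tfae_have 4 → 3 := fun h4 A B C _ _ _ _ _ _ f g hf hg hfg => by
    obtain ⟨s, hs, hs'⟩ := h4 (ModuleCat.of R C) (ModuleCat.of R A)
    exact ⟨s, hs, exists_retraction_smul_of_smul_ext_one_eq_zero hf hg hfg s hs'⟩
  tfae_have 4 → 5 := fun h4 M _ _ N => h4 (ModuleCat.of R M) N
  tfae_have 5 → 4 := fun h5 M N => h5 M N
  tfae_have 4 → 6 := fun h4 M _ _ N => h4 N (ModuleCat.of R M)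
  tfae_have 6 → 4 := fun h6 M N => h6 N M
  tfae_finish
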